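/- For ν ≥ 1, the function ρ(ℓ) = e^(-ℓ)·(1/Σ(ν+1,ν+1))·Σ_{i=1}^{ν+1} Σ(ν-i+2, ν+1)·ℓ^(i-1)/(i-1)!, with Σ(i,j) = C(i+j-2, i-1)/2^(i+j-1), satisfies ρ(0) = 1 and ρ'(0) = 0. -/

import Mathlib

noncomputable def Sig (i j : ℕ) : ℝ :=
  (Nat.choose (i + j - 2) (i - 1) : ℝ) / 2 ^ (i + j - 1)

noncomputable def ρ (ν : ℕ) (ℓ : ℝ) : ℝ :=
  Real.exp (-ℓ) * (1 / Sig (ν + 1) (ν + 1)) *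
    ∑ i ∈ Finset.Icc 1 (ν + 1),
      Sig (ν + 2 - i) (ν + 1) * ℓ ^ (i - 1) / (Nat.factorial (i - 1) : ℝ)

/-!
At `ℓ = 0` only the constant term `Sig (ν + 1) (ν + 1)` of the polynomial factor survives, which
gives `ρ 0 = 1`. Differentiating `e^{-ℓ} p(ℓ)` at `0` gives `p'(0) - p(0)`, and
`p'(0) - p(0) = Sig ν (ν + 1) - Sig (ν + 1) (ν + 1)`, which vanishes because
`C(2ν, ν) = 2 C(2ν - 1, ν - 1)` for `ν ≥ 1`.
-/

open Finset Nat

lemma Sig_pos (i : ℕ) {j : ℕ} (hj : 1 ≤ j) : 0 < Sig i j := by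
  have : 0 < (i + j - 2).choose (i - 1) := choose_pos (by omega)
  unfold Sig
  positivity

lemma Sig_add_one_add_two_eq_Sig_diag (n : ℕ) : Sig (n + 1) (n + 2) = Sig (n + 2) (n + 2) := by
  have hchoose : (2 * n + 2).choose (n + 1) = 2 * (2 * n + 1).choose n := by
    rw [choose_succ_succ, choose_symm_half]
    ring
  simp only [Sig, show n + 1 + (n + 2) - 2 = 2 * n + 1 by omega,
    show n + 2 + (n + 2) - 2 = 2 * n + 2 by omega, show n + 1 + (n + 2) - 1 = 2 * n + 2 by omega,
    show n + 2 + (n + 2) - 1 = 2 * n + 3 by omega, add_tsub_cancel_right,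
    show n + 2 - 1 = n + 1 by omega]
  rw [hchoose]
  push_cast
  ring

section ExpNegMulPolynomial

variable (a : ℕ → ℝ) {N : ℕ}

lemma sum_mul_zero_pow_div_factorial (hN : 1 ≤ N) :
    ∑ k ∈ range N, a k * 0 ^ k / (k ! : ℝ) = a 0 := by
  rw [sum_eq_single_of_mem 0 (mem_range.2 hN)]
  · simp
  · intro k _ hk
    simp [zero_pow hk]

lemma hasDerivAt_sum_mul_pow_div_factorial_zero (hN : 2 ≤ N) :
    HasDerivAt (fun x : ℝ => ∑ k ∈ range N, a k * x ^ k / (k ! : ℝ)) (a 1) 0 := by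
  have hsum := HasDerivAt.fun_sum (u := range N) fun k _ =>
    ((hasDerivAt_pow k (0 : ℝ)).const_mul (a k)).div_const (k ! : ℝ)
  refine hsum.congr_deriv ?_
  rw [sum_eq_single_of_mem 1 (mem_range.2 hN)]
  · simp
  · intro k _ hk
    rcases k with _ | k
    · simp
    · simp [zero_pow (show k ≠ 0 by omega)]

end ExpNegMulPolynomial

lemma HasDerivAt.exp_neg_mul {f : ℝ → ℝ} {f' x : ℝ} (hf : HasDerivAt f f' x) :
    HasDerivAt (fun y => Real.exp (-y) * f y) (Real.exp (-x) * (f' - f x)) x := by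
  have hexp : HasDerivAt (fun y => Real.exp (-y)) (-Real.exp (-x)) x := by
    simpa using (hasDerivAt_neg x).exp
  exact (hexp.mul hf).congr_deriv (by ring)

lemma ρ_eq (ν : ℕ) (ℓ : ℝ) :
    ρ ν ℓ = (Sig (ν + 1) (ν + 1))⁻¹ *
      (Real.exp (-ℓ) * ∑ k ∈ range (ν + 1), Sig (ν + 1 - k) (ν + 1) * ℓ ^ k / (k ! : ℝ)) := by
  rw [ρ, ← Ico_add_one_right_eq_Icc, sum_Ico_eq_sum_range, add_tsub_cancel_right, one_div]
  simp only [show ∀ k, ν + 2 - (1 + k) = ν + 1 - k by omega, add_tsub_cancel_left]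
  ring

theorem stmt_9 (ν : ℕ) (hν : 1 ≤ ν) :
    ρ ν 0 = 1 ∧ deriv (ρ ν) 0 = 0 := by
  obtain ⟨n, rfl⟩ : ∃ n, ν = n + 1 := ⟨ν - 1, by omega⟩
  set a : ℕ → ℝ := fun k => Sig (n + 2 - k) (n + 2)
  have hS : Sig (n + 2) (n + 2) ≠ 0 := (Sig_pos _ (by omega)).ne'
  have ha : a 1 = a 0 := Sig_add_one_add_two_eq_Sig_diag n
  have hp0 := sum_mul_zero_pow_div_factorial a (N := n + 2) (by omega)
  have hρ : HasDerivAt (ρ (n + 1))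
      ((Sig (n + 2) (n + 2))⁻¹ * (Real.exp (-0) * (a 1 - a 0))) 0 := by
    have hp := ((hasDerivAt_sum_mul_pow_div_factorial_zero a (N := n + 2) (by omega)).exp_neg_mul
      ).const_mul (Sig (n + 2) (n + 2))⁻¹
    rw [hp0] at hp
    exact hp.congr_of_eventuallyEq (Filter.Eventually.of_forall (ρ_eq (n + 1)))
  refine ⟨?_, by rw [hρ.deriv, ha, sub_self, mul_zero, mul_zero]⟩
  rw [ρ_eq, hp0]
  simp [a, hS]
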